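/- If u and v are non-empty prefixes of a uniformly recurrent sequence X with u a prefix of v, then every return word on v is a concatenation of return words on u. -/

import Mathlib

/-!
Every occurrence of `v` is an occurrence of `u`, so a return word on `v` runs from one occurrence
of `u` to another; cutting it at the occurrences of `u` in between splits it into return words
on `u`.
-/

namespace Cobham

open Filter

variable {A : Type*} {B : Type*}

/-- The factor `X_i X_{i+1} ... X_{i+n-1}` of the sequence `X`. -/
def word (X : ℕ → A) (i n : ℕ) : List A := (List.range n).map fun k => X (i + k)

/-- `u` occurs in `X` at position `i`. -/
def OccursAt (X : ℕ → A) (u : List A) (i : ℕ) : Prop := word X i u.length = u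

def IsFactor (X : ℕ → A) (u : List A) : Prop := ∃ i, OccursAt X u i

def IsPrefix (X : ℕ → A) (u : List A) : Prop := OccursAt X u 0

/-- Uniformly recurrent: gaps between successive occurrences of any factor are bounded. -/
def UnifRec (X : ℕ → A) : Prop :=
  ∀ u, IsFactor X u → ∃ g : ℕ, ∀ i : ℕ, ∃ j, i ≤ j ∧ j ≤ i + g ∧ OccursAt X u j

/-- Return words on `u`: factors between two successive occurrences of `u` in `X`. -/
def ReturnWords (X : ℕ → A) (u : List A) : Set (List A) :=
  { v | ∃ i j, OccursAt X u i ∧ OccursAt X u j ∧ i < j ∧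
      (∀ k, i < k → k < j → ¬ OccursAt X u k) ∧ v = word X i (j - i) }

/-- Application of a morphism to a word, by concatenation. -/
def wordApply (σ : A → List B) (w : List A) : List B := w.flatMap σ

/-- Iterate of a morphism. -/
def mPow (σ : A → List A) : ℕ → A → List A
  | 0 => fun a => [a]
  | k + 1 => fun a => wordApply σ (mPow σ k a)

def Nonerasing (σ : A → List A) : Prop := ∀ a, σ a ≠ []

/-- Primitivity: some power of the morphism maps every letter to a word
containing every letter. -/
def Primitive (σ : A → List A) : Prop := ∃ k, 0 < k ∧ ∀ a b : A, b ∈ mPow σ k a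

/-- Primitivity restricted to a set of letters. -/
def PrimitiveOn (σ : A → List A) (S : Set A) : Prop :=
  ∃ k, 0 < k ∧ ∀ a ∈ S, ∀ b ∈ S, b ∈ mPow σ k a

/-- `X` is a fixed point of `σ`: the image of every prefix of `X` is a prefix of `X`. -/
def IsFixedPt (σ : A → List A) (X : ℕ → A) : Prop :=
  ∀ n, OccursAt X (wordApply σ (word X 0 n)) 0

def UltPeriodic (X : ℕ → A) : Prop :=
  ∃ N p : ℕ, 0 < p ∧ ∀ n, N ≤ n → X (n + p) = X n

def Periodic (X : ℕ → A) : Prop := ∃ p : ℕ, 0 < p ∧ ∀ n, X (n + p) = X n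

/-- `u` occurs at position `i` inside the word `w`. -/
def WOcc (u w : List A) (i : ℕ) : Prop :=
  i + u.length ≤ w.length ∧ (w.drop i).take u.length = u

/-- `D` is the derived sequence of `X` on `u`: a sequence of return words on `u`
whose concatenation is `X`. -/
def IsDerived (X : ℕ → A) (u : List A) (D : ℕ → List A) : Prop :=
  (∀ n, D n ∈ ReturnWords X u) ∧ ∀ n, OccursAt X ((word D 0 n).flatten) 0

/-- `τu` is the return substitution of `τ` on `u` (on the alphabet of return words):
`Θ_u ∘ τ_u = τ ∘ Θ_u`. -/
def RetSub (τ : A → List A) (X : ℕ → A) (u : List A)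
    (τu : List A → List (List A)) : Prop :=
  ∀ r ∈ ReturnWords X u,
    (∀ s ∈ τu r, s ∈ ReturnWords X u) ∧ (τu r).flatten = wordApply τ r

/-- Eigenvalue of a complex matrix. -/
def IsEig {n : Type*} [Fintype n] (M : Matrix n n ℂ) (μ : ℂ) : Prop :=
  ∃ v : n → ℂ, v ≠ 0 ∧ M.mulVec v = μ • v

/-- Incidence matrix of a morphism, as a complex matrix. -/
def incMat [Fintype A] [DecidableEq A] (σ : A → List A) : Matrix A A ℂ :=
  Matrix.of fun i j => (((σ j).count i : ℕ) : ℂ)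

/-- Incidence matrix of a return substitution, indexed by the set of return words. -/
def retMat [DecidableEq A] (τu : List A → List (List A)) (S : Set (List A))
    [Fintype S] : Matrix S S ℂ :=
  Matrix.of fun i j => (((τu (j : List A)).count (i : List A) : ℕ) : ℂ)

/-- `α` is the dominant eigenvalue of the incidence matrix of `σ`. -/
def IsDomEig [Fintype A] [DecidableEq A] (σ : A → List A) (α : ℝ) : Prop :=
  IsEig (incMat σ) (α : ℂ) ∧ ∀ μ : ℂ, IsEig (incMat σ) μ → ‖μ‖ ≤ α

/-- `X` is `α`-substitutive: the image under a letter-to-letter morphism of the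
fixed point of a primitive substitution with dominant eigenvalue `α`. -/
def IsSubstitutiveWith {A : Type*} (α : ℝ) (X : ℕ → A) : Prop :=
  ∃ (C : Type) (hF : Fintype C) (hD : DecidableEq C) (σ : C → List C) (c : C)
    (Y : ℕ → C) (ψ : C → A),
    Nonerasing σ ∧ (σ c).head? = some c ∧ Primitive σ ∧
    Y 0 = c ∧ IsFixedPt σ Y ∧ (∀ n, X n = ψ (Y n)) ∧ @IsDomEig C hF hD σ α

/-- Perron number: a real algebraic integer `α ≥ 1` strictly dominating the
absolute values of its other conjugates. -/
def IsPerron (α : ℝ) : Prop :=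
  1 ≤ α ∧ IsIntegral ℤ α ∧
    ∀ β : ℂ, Polynomial.aeval β (minpoly ℤ α) = 0 → β ≠ (α : ℂ) → ‖β‖ < α

theorem length_word (X : ℕ → A) (i n : ℕ) : (word X i n).length = n := by
  simp [word]

theorem word_append (X : ℕ → A) (i m n : ℕ) :
    word X i m ++ word X (i + m) n = word X i (m + n) := by
  simp only [word, List.range_add, List.map_append, List.map_map, Function.comp_def, add_assoc]

theorem OccursAt.of_isPrefix {X : ℕ → A} {u v : List A} {i : ℕ} (huv : u <+: v)
    (h : OccursAt X v i) : OccursAt X u i := by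
  obtain ⟨t, rfl⟩ := huv
  rw [OccursAt, List.length_append, ← word_append] at h
  exact (List.append_inj h (length_word X i u.length)).1

theorem exists_returnWords_flatten_eq_word {X : ℕ → A} {u : List A} {i n : ℕ}
    (hi : OccursAt X u i) (hn : OccursAt X u (i + n)) :
    ∃ l : List (List A), (∀ w ∈ l, w ∈ ReturnWords X u) ∧ l.flatten = word X i n := by
  induction n using Nat.strong_induction_on generalizing i with
  | _ n ih =>
    by_cases hmid : ∃ k, 0 < k ∧ k < n ∧ OccursAt X u (i + k)
    · obtain ⟨k, hk0, hkn, hk⟩ := hmid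
      obtain ⟨l₁, hl₁, hflat₁⟩ := ih k hkn hi hk
      obtain ⟨l₂, hl₂, hflat₂⟩ :=
        ih (n - k) (by omega) hk (by rwa [add_assoc, Nat.add_sub_cancel' hkn.le])
      refine ⟨l₁ ++ l₂, fun w hw => (List.mem_append.1 hw).elim (hl₁ w) (hl₂ w), ?_⟩
      rw [List.flatten_append, hflat₁, hflat₂, word_append, Nat.add_sub_cancel' hkn.le]
    · rcases Nat.eq_zero_or_pos n with rfl | hn0
      · exact ⟨[], by simp, by simp [word]⟩
      refine ⟨[word X i n], ?_, List.flatten_singleton⟩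
      intro w hw
      rw [List.mem_singleton.1 hw]
      refine ⟨i, i + n, hi, hn, by omega,
        fun k hik hkn hk => hmid ⟨k - i, by omega, by omega, ?_⟩, ?_⟩
      · rwa [Nat.add_sub_cancel' hik.le]
      · rw [Nat.add_sub_cancel_left]

theorem stmt3_general {A : Type*} (X : ℕ → A) (u v : List A)
    (huv : u <+: v) :
    ∀ r ∈ ReturnWords X v,
      ∃ l : List (List A), (∀ w ∈ l, w ∈ ReturnWords X u) ∧ l.flatten = r := by
  rintro r ⟨i, j, hi, hj, hij, -, rfl⟩
  refine exists_returnWords_flatten_eq_word (hi.of_isPrefix huv) ?_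
  rw [Nat.add_sub_cancel' hij.le]
  exact hj.of_isPrefix huv

theorem stmt3 {A : Type*} (X : ℕ → A) (u v : List A)
    (hX : UnifRec X) (hu : u ≠ []) (hv : v ≠ [])
    (hpu : IsPrefix X u) (hpv : IsPrefix X v) (huv : u <+: v) :
    ∀ r ∈ ReturnWords X v,
      ∃ l : List (List A), (∀ w ∈ l, w ∈ ReturnWords X u) ∧ l.flatten = r :=
  stmt3_general X u v huv

end Cobham
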